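/- arXiv:0710.2254 — 2 statements merged into one kernel-verified Lean document; each statement's English description precedes it below -/
import Mathlib

section
/- The pullback of an equivalence of categories along an isofibration of groupoids is again an equivalence of categories. -/
open CategoryTheory

/-- The strict pullback of groupoids along functors `h : C ⥤ D` and `g : B ⥤ D`:
objects are pairs `(c, b)` with `h.obj c = g.obj b`. -/
def GrpdPullback {C B D : Type*} [Groupoid C] [Groupoid B] [Groupoid D]
    (h : C ⥤ D) (g : B ⥤ D) : Type _ :=
  { p : C × B // h.obj p.1 = g.obj p.2 }

instance {C B D : Type*} [Groupoid C] [Groupoid B] [Groupoid D]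
    (h : C ⥤ D) (g : B ⥤ D) : Category (GrpdPullback h g) where
  Hom p q := { m : (p.1.1 ⟶ q.1.1) × (p.1.2 ⟶ q.1.2) //
      h.map m.1 ≫ eqToHom q.2 = eqToHom p.2 ≫ g.map m.2 }
  id p := ⟨(𝟙 _, 𝟙 _), by simp⟩
  comp φ ψ := ⟨(φ.1.1 ≫ ψ.1.1, φ.1.2 ≫ ψ.1.2), by
    simp only [Functor.map_comp, Category.assoc]
    rw [ψ.2, ← Category.assoc, φ.2, Category.assoc]⟩
  id_comp φ := Subtype.ext (Prod.ext (Category.id_comp _) (Category.id_comp _))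
  comp_id φ := Subtype.ext (Prod.ext (Category.comp_id _) (Category.comp_id _))
  assoc φ ψ χ := Subtype.ext (Prod.ext (Category.assoc _ _ _) (Category.assoc _ _ _))

/-- The second projection from the pullback. -/
def GrpdPullback.snd {C B D : Type*} [Groupoid C] [Groupoid B] [Groupoid D]
    (h : C ⥤ D) (g : B ⥤ D) : GrpdPullback h g ⥤ B where
  obj p := p.1.2
  map m := m.1.2

/-! The pullback square transports full faithfulness from `h` to the projection, since a morphism
of the pullback is determined by its `B`-component together with its `h`-preimage. For essential
surjectivity, an object `b` is hit once the isomorphism `h.obj c ≅ g.obj b` supplied by `h` is lifted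
along the isofibration `g` to an isomorphism `b ≅ b'` with `g.obj b' = h.obj c`. -/

def IsGrpdIsofibration {B D : Type*} [Groupoid B] [Groupoid D] (g : B ⥤ D) : Prop :=
  ∀ (b : B) (d : D) (γ : g.obj b ⟶ d),
    ∃ (b' : B) (e : g.obj b' = d) (β : b ⟶ b'), g.map β ≫ eqToHom e = γ

namespace GrpdPullback

variable {C B D : Type*} [Groupoid C] [Groupoid B] [Groupoid D] {h : C ⥤ D} {g : B ⥤ D}

lemma hom_comm {p q : GrpdPullback h g} (φ : p ⟶ q) :
    h.map φ.1.1 ≫ eqToHom q.2 = eqToHom p.2 ≫ g.map φ.1.2 :=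
  φ.2

lemma hom_ext [h.Faithful] {p q : GrpdPullback h g} {φ ψ : p ⟶ q}
    (hsnd : φ.1.2 = ψ.1.2) : φ = ψ := by
  have hfst : h.map φ.1.1 = h.map ψ.1.1 := by
    rw [← cancel_mono (eqToHom q.2), hom_comm, hom_comm, hsnd]
  exact Subtype.ext (Prod.ext (h.map_injective hfst) hsnd)

instance snd_faithful [h.Faithful] : (snd h g).Faithful :=
  ⟨hom_ext⟩

instance snd_full [h.Full] : (snd h g).Full :=
  ⟨fun {p q} (β : p.1.2 ⟶ q.1.2) =>
    ⟨⟨(h.preimage (eqToHom p.2 ≫ g.map β ≫ eqToHom q.2.symm), β), by simp⟩, rfl⟩⟩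

lemma snd_essSurj [h.EssSurj] (hg : IsGrpdIsofibration g) : (snd h g).EssSurj := by
  refine ⟨fun b => ?_⟩
  obtain ⟨b', e, β, -⟩ := hg b _ (h.objObjPreimageIso (g.obj b)).inv
  exact ⟨⟨(h.objPreimage (g.obj b), b'), e.symm⟩, ⟨(asIso β).symm⟩⟩

end GrpdPullback

/-- The pullback of an equivalence of categories along an isofibration of groupoids
is again an equivalence of categories. -/
theorem stmt_4 {C B D : Type*} [Groupoid C] [Groupoid B] [Groupoid D]
    (h : C ⥤ D) (g : B ⥤ D)
    (hg : ∀ (b : B) (d : D) (γ : g.obj b ⟶ d),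
      ∃ (b' : B) (e : g.obj b' = d) (β : b ⟶ b'), g.map β ≫ eqToHom e = γ)
    (hh : h.IsEquivalence) :
    (GrpdPullback.snd h g).IsEquivalence :=
  { essSurj := GrpdPullback.snd_essSurj hg }
end

section
/- Let X be a simplicial set satisfying the Segal condition (all Segal maps X_n → X_1 ×_{X_0} ⋯ ×_{X_0} X_1 are bijections) and also the Bousfield–Segal condition: the maps X_n → X_1 ×_{X_0} ⋯ ×_{X_0} X_1 induced by γ^k : [1] → [n], 0 ↦ 0, 1 ↦ k+1, are bijections for n ≥ 2. Then the category corresponding to X via the Segal condition is a groupoid. -/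
open CategoryTheory SimplexCategory Opposite

universe u

/-- The map `γ^k : [1] ⟶ [n]` in `Δ` sending `0 ↦ 0` and `1 ↦ k + 1`. -/
def bousfieldMap {n : ℕ} (k : Fin n) : (mk 1 : SimplexCategory) ⟶ mk n :=
  mkHom ⟨fun j => if j = 0 then 0 else k.succ, by
    intro a b hab
    fin_cases a <;> fin_cases b <;> simp_all [Fin.le_def]⟩

/-! The Bousfield–Segal surjectivity for `n = 2` says that any two arrows `f : x ⟶ y` and
`g : x ⟶ z` with a common source are the edges `0 → 1` and `0 → 2` of a 2-simplex of the
nerve, so `g` factors through `f`. Taking `g = 𝟙 x` gives every arrow a right inverse, and a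
category in which every arrow has a right inverse is a groupoid. -/

lemma bousfieldMap_zero_eq_δ_two : bousfieldMap (0 : Fin 2) = δ 2 := by
  ext i; fin_cases i <;> rfl

lemma bousfieldMap_one_eq_δ_one : bousfieldMap (1 : Fin 2) = δ 1 := by
  ext i; fin_cases i <;> rfl

namespace CategoryTheory

universe v

lemma ComposableArrows.mk₁_eq_mk₁_iff {C : Type u} [Category.{v} C] {X Y X' Y' : C}
    (f : X ⟶ Y) (f' : X' ⟶ Y') :
    mk₁ f = mk₁ f' ↔ Arrow.mk f = Arrow.mk f' :=
  ⟨congrArg arrowEquiv, congrArg arrowEquiv.symm⟩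

lemma isIso_of_forall_exists_comp_eq_id {C : Type u} [Category.{v} C]
    (h : ∀ {x y : C} (f : x ⟶ y), ∃ g : y ⟶ x, f ≫ g = 𝟙 x) {x y : C} (f : x ⟶ y) :
    IsIso f := by
  obtain ⟨g, hfg⟩ := h f
  obtain ⟨f', hgf'⟩ := h g
  have hf' : f' = f := by
    calc f' = (f ≫ g) ≫ f' := by rw [hfg, Category.id_comp]
      _ = f := by rw [Category.assoc, hgf', Category.comp_id]
  exact ⟨g, hfg, hf' ▸ hgf'⟩

lemma nerve.exists_comp_eq_of_δ {C : Type u} [Category.{v} C] (w : (nerve C).obj (op (mk 2)))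
    {x y z : C} {f : x ⟶ y} {g : x ⟶ z}
    (h₂ : (nerve C).δ 2 w = .mk₁ f) (h₁ : (nerve C).δ 1 w = .mk₁ g) :
    ∃ h : y ⟶ z, f ≫ h = g := by
  obtain ⟨_, _, _, a, b, rfl⟩ := ComposableArrows.mk₂_surjective w
  rw [nerve.δ₂_mk₂_eq] at h₂
  rw [nerve.δ₁_mk₂_eq] at h₁
  obtain ⟨rfl, rfl, rfl⟩ := (Arrow.mk_eq_mk_iff _ _).1 ((ComposableArrows.mk₁_eq_mk₁_iff _ _).1 h₂)
  obtain ⟨_, rfl, hg⟩ := (Arrow.mk_eq_mk_iff _ _).1 ((ComposableArrows.mk₁_eq_mk₁_iff _ _).1 h₁)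
  exact ⟨b, by simpa using hg⟩

end CategoryTheory

theorem stmt_12_general (C : Type u) [SmallCategory C]
    (hsurj : ∀ (n : ℕ) (p : Fin (n + 2) → (nerve C).obj (op (mk 1))),
      (∀ j k : Fin (n + 2),
        (nerve C).map (δ (1 : Fin 2)).op (p j) = (nerve C).map (δ (1 : Fin 2)).op (p k)) →
      ∃ w : (nerve C).obj (op (mk (n + 2))),
        ∀ k : Fin (n + 2), (nerve C).map (bousfieldMap k).op w = p k) :
    ∀ {x y : C} (f : x ⟶ y), IsIso f := by
  refine isIso_of_forall_exists_comp_eq_id fun {x y} f => ?_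
  obtain ⟨w, hw⟩ := hsurj 0 ![.mk₁ f, .mk₁ (𝟙 x)] fun j k => by
    apply ComposableArrows.ext₀
    fin_cases j <;> fin_cases k <;> rfl
  have h₂ := hw 0
  have h₁ := hw 1
  rw [bousfieldMap_zero_eq_δ_two] at h₂
  rw [bousfieldMap_one_eq_δ_one] at h₁
  exact nerve.exists_comp_eq_of_δ w h₂ h₁

/-- If the nerve of a small category `C` (a simplicial set satisfying the Segal
condition) also satisfies the Bousfield–Segal condition, i.e. for every `n ≥ 2` the map
`X_n → X_1 ×_{X_0} ⋯ ×_{X_0} X_1` induced by the maps `γ^k : [1] → [n]`, `0 ↦ 0`,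
`1 ↦ k + 1`, is a bijection, then `C` is a groupoid. -/
theorem stmt_12 (C : Type u) [SmallCategory C]
    (hinj : ∀ (n : ℕ) (w₁ w₂ : (nerve C).obj (op (mk (n + 2)))),
      (∀ k : Fin (n + 2),
        (nerve C).map (bousfieldMap k).op w₁ = (nerve C).map (bousfieldMap k).op w₂) →
      w₁ = w₂)
    (hsurj : ∀ (n : ℕ) (p : Fin (n + 2) → (nerve C).obj (op (mk 1))),
      (∀ j k : Fin (n + 2),
        (nerve C).map (δ (1 : Fin 2)).op (p j) = (nerve C).map (δ (1 : Fin 2)).op (p k)) →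
      ∃ w : (nerve C).obj (op (mk (n + 2))),
        ∀ k : Fin (n + 2), (nerve C).map (bousfieldMap k).op w = p k) :
    ∀ {x y : C} (f : x ⟶ y), IsIso f :=
  stmt_12_general C hsurj
end
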